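/- arXiv:2509.23078 — 2 statements merged into one kernel-verified Lean document; each statement's English description precedes it below -/
import Mathlib

section
/- Weight change under vertex exchange: Let G be a finite simple graph with a, b : V(G) → ℤ≥0 and h : V(G) → {0,1} such that d_G(w) = a(w) + b(w) + h(w) for all vertices w. Let (X_1, X_2) be a partition of V(G), u ∈ X_1 with d_{X_1}(u) ≤ a(u), and v ∈ X_2 with d_{X_2}(v) ≤ b(v) + h(v) − 1. Set X_1' = (X_1 \ {u}) ∪ {v} and X_2' = (X_2 \ {v}) ∪ {u}. Then ω(X_1', X_2') − ω(X_1, X_2) ≥ 2 − h(v) + h(u) − 2·e(u,v), where e(u,v) = 1 if uv ∈ E(G) and 0 otherwise. -/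
open scoped Classical

/-- Number of edges of `G` with both endpoints in `X`. -/
noncomputable def edgesIn {V : Type*} [Fintype V] [DecidableEq V]
    (G : SimpleGraph V) [DecidableRel G.Adj] (X : Finset V) : ℕ :=
  (G.edgeFinset.filter (fun e => ∀ v ∈ e, v ∈ X)).card

/-- The weight `ω(X₁, X₂) = e(X₁) + e(X₂) + Σ_{u ∈ X₁} b(u) + Σ_{v ∈ X₂} a(v)`. -/
noncomputable def wt {V : Type*} [Fintype V] [DecidableEq V]
    (G : SimpleGraph V) [DecidableRel G.Adj] (a b : V → ℕ) (X1 X2 : Finset V) : ℕ :=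
  edgesIn G X1 + edgesIn G X2 + ∑ u ∈ X1, b u + ∑ v ∈ X2, a v

open Finset in
lemma edgesIn_insert {V : Type*} [Fintype V] [DecidableEq V]
    (G : SimpleGraph V) [DecidableRel G.Adj] (S : Finset V) (v : V) (hv : v ∉ S) :
    edgesIn G (insert v S) = edgesIn G S + (S.filter (G.Adj v)).card := by
  classical
  unfold edgesIn
  have hsplit := Finset.card_filter_add_card_filter_not
    (s := G.edgeFinset.filter (fun e => ∀ x ∈ e, x ∈ insert v S)) (p := fun e => v ∈ e)
  rw [Finset.filter_filter, Finset.filter_filter] at hsplit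
  have hB : (G.edgeFinset.filter (fun e => (∀ x ∈ e, x ∈ insert v S) ∧ ¬ v ∈ e))
      = G.edgeFinset.filter (fun e => ∀ x ∈ e, x ∈ S) := by
    apply Finset.filter_congr
    intro e he
    constructor
    · rintro ⟨h1, h2⟩ x hx
      rcases Finset.mem_insert.mp (h1 x hx) with rfl | hS
      · exact absurd hx h2
      · exact hS
    · intro h1
      exact ⟨fun x hx => Finset.mem_insert_of_mem (h1 x hx), fun hve => hv (h1 v hve)⟩
  have hA : (G.edgeFinset.filter (fun e => (∀ x ∈ e, x ∈ insert v S) ∧ v ∈ e)).card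
      = (S.filter (G.Adj v)).card := by
    symm
    apply Finset.card_bij (fun w _ => s(v, w))
    · intro w hw
      simp only [Finset.mem_filter] at hw ⊢
      refine ⟨SimpleGraph.mem_edgeFinset.mpr hw.2, ?_, Sym2.mem_mk_left _ _⟩
      intro x hx
      rcases Sym2.mem_iff.mp hx with rfl | rfl
      · exact Finset.mem_insert_self _ _
      · exact Finset.mem_insert_of_mem hw.1
    · intro w1 h1 w2 h2 heq
      exact Sym2.congr_right.mp heq
    · intro e he
      simp only [Finset.mem_filter] at he
      obtain ⟨hedge, hsub, hve⟩ := he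
      induction e using Sym2.ind with
      | _ x y =>
        have hadj : G.Adj x y := SimpleGraph.mem_edgeFinset.mp hedge
        rcases Sym2.mem_iff.mp hve with rfl | rfl
        · have hy : y ∈ S := by
            rcases Finset.mem_insert.mp (hsub y (Sym2.mem_mk_right _ _)) with rfl | hS
            · exact absurd hadj (G.irrefl)
            · exact hS
          exact ⟨y, Finset.mem_filter.mpr ⟨hy, hadj⟩, rfl⟩
        · have hx : x ∈ S := by
            rcases Finset.mem_insert.mp (hsub x (Sym2.mem_mk_left _ _)) with rfl | hS
            · exact absurd hadj (fun hh => G.irrefl hh.symm)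
            · exact hS
          exact ⟨x, Finset.mem_filter.mpr ⟨hx, hadj.symm⟩, Sym2.eq_swap⟩
  rw [hB] at hsplit
  omega

lemma edgesIn_erase {V : Type*} [Fintype V] [DecidableEq V]
    (G : SimpleGraph V) [DecidableRel G.Adj] (X : Finset V) (u : V) (hu : u ∈ X) :
    edgesIn G X = edgesIn G (X.erase u) + (X.filter (G.Adj u)).card := by
  classical
  have h1 := edgesIn_insert G (X.erase u) u (Finset.notMem_erase u X)
  rw [Finset.insert_erase hu] at h1
  rw [h1]
  congr 1
  rw [Finset.filter_erase, Finset.erase_eq_of_notMem]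
  simp [G.irrefl]

/-- Weight change under a vertex exchange. -/
theorem weight_change_exchange {V : Type*} [Fintype V] [DecidableEq V]
    (G : SimpleGraph V) [DecidableRel G.Adj] (a b h : V → ℕ)
    (hh : ∀ w, h w ≤ 1)
    (hdeg : ∀ w : V, G.degree w = a w + b w + h w)
    (X1 X2 : Finset V) (hdisj : Disjoint X1 X2) (hun : X1 ∪ X2 = Finset.univ)
    (u v : V) (hu : u ∈ X1) (hv : v ∈ X2)
    (hdu : (X1.filter (G.Adj u)).card ≤ a u)
    (hdv : (X2.filter (G.Adj v)).card + 1 ≤ b v + h v) :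
    (wt G a b (insert v (X1.erase u)) (insert u (X2.erase v)) : ℤ) - wt G a b X1 X2 ≥
      2 - (h v : ℤ) + h u - 2 * (if G.Adj u v then 1 else 0) := by
  classical
  have hvX1 : v ∉ X1 := fun hc => Finset.disjoint_left.mp hdisj hc hv
  have huX2 : u ∉ X2 := fun hc => Finset.disjoint_right.mp hdisj hc hu
  have hvE : v ∉ X1.erase u := fun hc => hvX1 (Finset.mem_of_mem_erase hc)
  have huE : u ∉ X2.erase v := fun hc => huX2 (Finset.mem_of_mem_erase hc)
  have hdsplit : ∀ w, a w + b w + h w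
      = (X1.filter (G.Adj w)).card + (X2.filter (G.Adj w)).card := by
    intro w
    rw [← hdeg w]
    show (G.neighborFinset w).card = _
    rw [SimpleGraph.neighborFinset_eq_filter, ← hun, Finset.filter_union,
      Finset.card_union_of_disjoint (Finset.disjoint_filter_filter hdisj)]
  have hd_u := hdsplit u
  have hd_v := hdsplit v
  set E : ℕ := if G.Adj u v then 1 else 0 with hE
  have hE1 := edgesIn_erase G X1 u hu
  have hE2 := edgesIn_erase G X2 v hv
  have hE1' := edgesIn_insert G (X1.erase u) v hvE
  have hE2' := edgesIn_insert G (X2.erase v) u huE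
  have hcnt1 : ((X1.erase u).filter (G.Adj v)).card + E = (X1.filter (G.Adj v)).card := by
    rw [Finset.filter_erase]
    by_cases hA : G.Adj u v
    · have hmem : u ∈ X1.filter (G.Adj v) := Finset.mem_filter.mpr ⟨hu, hA.symm⟩
      rw [Finset.card_erase_of_mem hmem]
      have := Finset.card_pos.mpr ⟨u, hmem⟩
      simp only [hE, if_pos hA]
      omega
    · rw [Finset.erase_eq_of_notMem (fun hc => hA (Finset.mem_filter.mp hc).2.symm)]
      simp [hE, hA]
  have hcnt2 : ((X2.erase v).filter (G.Adj u)).card + E = (X2.filter (G.Adj u)).card := by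
    rw [Finset.filter_erase]
    by_cases hA : G.Adj u v
    · have hmem : v ∈ X2.filter (G.Adj u) := Finset.mem_filter.mpr ⟨hv, hA⟩
      rw [Finset.card_erase_of_mem hmem]
      have := Finset.card_pos.mpr ⟨v, hmem⟩
      simp only [hE, if_pos hA]
      omega
    · rw [Finset.erase_eq_of_notMem (fun hc => hA (Finset.mem_filter.mp hc).2)]
      simp [hE, hA]
  have hs1 : ∑ x ∈ insert v (X1.erase u), b x = b v + ∑ x ∈ X1.erase u, b x :=
    Finset.sum_insert hvE
  have hs1' : ∑ x ∈ X1.erase u, b x + b u = ∑ x ∈ X1, b x := Finset.sum_erase_add X1 b hu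
  have hs2 : ∑ x ∈ insert u (X2.erase v), a x = a u + ∑ x ∈ X2.erase v, a x :=
    Finset.sum_insert huE
  have hs2' : ∑ x ∈ X2.erase v, a x + a v = ∑ x ∈ X2, a x := Finset.sum_erase_add X2 a hv
  have hEcast : (if G.Adj u v then (1:ℤ) else 0) = (E : ℤ) := by
    by_cases hA : G.Adj u v <;> simp [hE, hA]
  rw [hEcast]
  have hhu := hh u
  have hhv := hh v
  unfold wt

  omega
end

section
/- Exact deficiency values in optimal degenerate partitions: In the setting where G is a finite simple graph with no (a,b)-feasible pair, a, b : V(G) → ℤ≥0, h : V(G) → {0,1}, d_G(u) = a(u) + b(u) + h(u) and min{a(u), b(u)} ≥ 1 for all u, let (X_1, X_2) be a degenerate partition of V(G) maximizing the weight ω(X_1,X_2) and, subject to that, minimizing |X_1|. Then every u ∈ X_1 with d_{X_1}(u) ≤ a(u) satisfies d_{X_1}(u) = a(u) exactly, and every v ∈ X_2 with d_{X_2}(v) ≤ b(v) + h(v) − 1 satisfies d_{X_2}(v) = b(v) + h(v) − 1 exactly. -/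
open scoped Classical

/-- `(A, B)` forms an `(a,b)`-feasible pair in `G`. -/
def FeasiblePair {V : Type*} [DecidableEq V] (G : SimpleGraph V) [DecidableRel G.Adj]
    (a b : V → ℕ) : Prop :=
  ∃ A B : Finset V, A.Nonempty ∧ B.Nonempty ∧ Disjoint A B ∧
    (∀ u ∈ A, a u ≤ (A.filter (G.Adj u)).card) ∧
    (∀ v ∈ B, b v ≤ (B.filter (G.Adj v)).card)

/-- A degenerate partition: both parts are non-empty, they partition `V(G)`,
`X₁` is 1-meager and `X₂` is 2-meager. -/
def DegenPartition {V : Type*} [Fintype V] [DecidableEq V]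
    (G : SimpleGraph V) [DecidableRel G.Adj] (a b h : V → ℕ) (X1 X2 : Finset V) : Prop :=
  X1.Nonempty ∧ X2.Nonempty ∧ Disjoint X1 X2 ∧ X1 ∪ X2 = Finset.univ ∧
    (∀ X' ⊆ X1, X'.Nonempty → ∃ x ∈ X', (X'.filter (G.Adj x)).card ≤ a x) ∧
    (∀ X' ⊆ X2, X'.Nonempty → ∃ x ∈ X', (X'.filter (G.Adj x)).card + 1 ≤ b x + h x)

set_option linter.unusedSectionVars false
set_option maxHeartbeats 1000000

open Finset

section AuxLemmas
variable {V : Type*} [Fintype V] [DecidableEq V] (G : SimpleGraph V) [DecidableRel G.Adj]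

lemma deg_mono' {X Y : Finset V} (hXY : X ⊆ Y) (x : V) :
    (X.filter (G.Adj x)).card ≤ (Y.filter (G.Adj x)).card :=
  card_le_card (filter_subset_filter _ hXY)

lemma deg_insert_le' (X : Finset V) (y x : V) :
    ((insert y X).filter (G.Adj x)).card ≤ (X.filter (G.Adj x)).card + 1 := by
  rw [filter_insert]
  split
  · exact card_insert_le _ _
  · exact Nat.le_succ_of_le le_rfl

lemma deg_insert_self' (X : Finset V) (x : V) :
    ((insert x X).filter (G.Adj x)).card = (X.filter (G.Adj x)).card := by
  rw [filter_insert, if_neg (G.irrefl)]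

lemma deg_erase_self' (X : Finset V) (x : V) :
    ((X.erase x).filter (G.Adj x)).card = (X.filter (G.Adj x)).card := by
  rw [filter_erase, Finset.erase_eq_of_notMem (by simp [G.irrefl])]

lemma deg_erase_adj' {X : Finset V} {x y : V} (hx : x ∈ X) (hadj : G.Adj y x) :
    ((X.erase x).filter (G.Adj y)).card + 1 = (X.filter (G.Adj y)).card := by
  rw [filter_erase]
  exact card_erase_add_one (mem_filter.mpr ⟨hx, hadj⟩)

lemma deg_insert_not_adj' {X : Finset V} {x y : V} (hadj : ¬ G.Adj y x) :
    ((insert x X).filter (G.Adj y)).card = (X.filter (G.Adj y)).card := by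
  rw [filter_insert, if_neg hadj]

lemma deg_univ' (x : V) : ((univ : Finset V).filter (G.Adj x)).card = G.degree x := by
  rw [← SimpleGraph.neighborFinset_eq_filter]; rfl

lemma deg_split' {X1 X2 : Finset V} (hdisj : Disjoint X1 X2) (huniv : X1 ∪ X2 = univ) (x : V) :
    (X1.filter (G.Adj x)).card + (X2.filter (G.Adj x)).card = G.degree x := by
  rw [← deg_univ' G x, ← huniv, filter_union,
    card_union_of_disjoint (disjoint_filter_filter hdisj)]

lemma edgesIn_insert' {X : Finset V} {x : V} (hx : x ∉ X) :
    edgesIn G (insert x X) = edgesIn G X + (X.filter (G.Adj x)).card := by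
  classical
  unfold edgesIn
  have hsplit : G.edgeFinset.filter (fun e => ∀ v ∈ e, v ∈ insert x X)
      = G.edgeFinset.filter (fun e => ∀ v ∈ e, v ∈ X)
        ∪ G.edgeFinset.filter (fun e => x ∈ e ∧ ∀ v ∈ e, v ∈ insert x X) := by
    ext e
    simp only [mem_union, mem_filter]
    constructor
    · rintro ⟨he, hall⟩
      by_cases hxe : x ∈ e
      · exact Or.inr ⟨he, hxe, hall⟩
      · refine Or.inl ⟨he, fun v hv => ?_⟩
        rcases Finset.mem_insert.mp (hall v hv) with hrfl | hmem
        · exact absurd (hrfl ▸ hv) hxe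
        · exact hmem
    · rintro (⟨he, hall⟩ | ⟨he, _, hall⟩)
      · exact ⟨he, fun v hv => Finset.mem_insert_of_mem (hall v hv)⟩
      · exact ⟨he, hall⟩
  have hdisj : Disjoint (G.edgeFinset.filter (fun e => ∀ v ∈ e, v ∈ X))
      (G.edgeFinset.filter (fun e => x ∈ e ∧ ∀ v ∈ e, v ∈ insert x X)) := by
    rw [Finset.disjoint_left]
    rintro e he1 he2
    exact hx ((mem_filter.mp he1).2 x (mem_filter.mp he2).2.1)
  rw [hsplit, card_union_of_disjoint hdisj]
  congr 1
  refine Finset.card_bij' (fun e he => Sym2.Mem.other (mem_filter.mp he).2.1)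
    (fun y hy => s(x, y)) ?_ ?_ ?_ ?_
  · intro e he
    obtain ⟨heE, hxe, hall⟩ := mem_filter.mp he
    have hother : Sym2.Mem.other hxe ∈ e := Sym2.other_mem hxe
    have hne : Sym2.Mem.other hxe ≠ x := by
      intro hEq
      have hdiag : e.IsDiag := by
        rw [← Sym2.other_spec hxe, hEq]
        exact Sym2.mk_isDiag_iff.mpr rfl
      exact (SimpleGraph.not_isDiag_of_mem_edgeFinset heE) hdiag
    have hmemX : Sym2.Mem.other hxe ∈ X := by
      rcases Finset.mem_insert.mp (hall _ hother) with hEq | hm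
      · exact absurd hEq hne
      · exact hm
    have hadj : G.Adj x (Sym2.Mem.other hxe) := by
      rw [← SimpleGraph.mem_edgeSet, Sym2.other_spec hxe]
      exact SimpleGraph.mem_edgeFinset.mp heE
    exact mem_filter.mpr ⟨hmemX, hadj⟩
  · intro y hy
    obtain ⟨hyX, hadj⟩ := mem_filter.mp hy
    refine mem_filter.mpr ⟨SimpleGraph.mem_edgeFinset.mpr hadj, ?_, ?_⟩
    · exact Sym2.mem_mk_left x y
    · intro v hv
      rcases Sym2.mem_iff.mp hv with rfl | rfl
      · exact Finset.mem_insert_self _ _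
      · exact Finset.mem_insert_of_mem hyX
  · intro e he
    exact Sym2.other_spec (mem_filter.mp he).2.1
  · intro y hy
    exact Sym2.congr_right.mp (Sym2.other_spec _)

variable {a b h : V → ℕ}

lemma wt_moveOut' {X1 X2 : Finset V} {u : V}
    (hdisj : Disjoint X1 X2) (huniv : X1 ∪ X2 = univ) (hu : u ∈ X1)
    (hd : G.degree u = a u + b u + h u) :
    wt G a b (X1.erase u) (insert u X2) + 2 * (X1.filter (G.Adj u)).card
      = wt G a b X1 X2 + (2 * a u + h u) := by
  have hu2 : u ∉ X2 := disjoint_left.mp hdisj hu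
  have e1 : edgesIn G X1 = edgesIn G (X1.erase u) + (X1.filter (G.Adj u)).card := by
    conv_lhs => rw [← insert_erase hu]
    rw [edgesIn_insert' G (notMem_erase u X1), deg_erase_self']
  have e2 : edgesIn G (insert u X2) = edgesIn G X2 + (X2.filter (G.Adj u)).card :=
    edgesIn_insert' G hu2
  have s1 : (∑ x ∈ X1.erase u, b x) + b u = ∑ x ∈ X1, b x := sum_erase_add _ _ hu
  have s2 : ∑ x ∈ insert u X2, a x = a u + ∑ x ∈ X2, a x := sum_insert hu2
  have hsum := deg_split' G hdisj huniv u
  rw [hd] at hsum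
  unfold wt
  omega

lemma wt_moveIn' {X1 X2 : Finset V} {y : V}
    (hdisj : Disjoint X1 X2) (huniv : X1 ∪ X2 = univ) (hy : y ∈ X2)
    (hd : G.degree y = a y + b y + h y) :
    wt G a b (insert y X1) (X2.erase y) + (2 * a y + h y)
      = wt G a b X1 X2 + 2 * (X1.filter (G.Adj y)).card := by
  have hy1 : y ∉ X1 := disjoint_right.mp hdisj hy
  have e1 : edgesIn G (insert y X1) = edgesIn G X1 + (X1.filter (G.Adj y)).card :=
    edgesIn_insert' G hy1
  have e2 : edgesIn G X2 = edgesIn G (X2.erase y) + (X2.filter (G.Adj y)).card := by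
    conv_lhs => rw [← insert_erase hy]
    rw [edgesIn_insert' G (notMem_erase y X2), deg_erase_self']
  have s1 : ∑ x ∈ insert y X1, b x = b y + ∑ x ∈ X1, b x := sum_insert hy1
  have s2 : (∑ x ∈ X2.erase y, a x) + a y = ∑ x ∈ X2, a x := sum_erase_add _ _ hy
  have hsum := deg_split' G hdisj huniv y
  rw [hd] at hsum
  unfold wt
  omega

end AuxLemmas

/-- Exact deficiency values in optimal degenerate partitions (Claim 9). -/
theorem exact_deficiency_values {V : Type*} [Fintype V] [DecidableEq V]
    (G : SimpleGraph V) [DecidableRel G.Adj] (a b h : V → ℕ)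
    (hh : ∀ u, h u ≤ 1)
    (hdeg : ∀ u : V, G.degree u = a u + b u + h u)
    (ha : ∀ u, 1 ≤ a u) (hb : ∀ u, 1 ≤ b u)
    (hnf : ¬ FeasiblePair G a b)
    (X1 X2 : Finset V) (hP : DegenPartition G a b h X1 X2)
    (hmaxw : ∀ Y1 Y2 : Finset V, DegenPartition G a b h Y1 Y2 →
      wt G a b Y1 Y2 ≤ wt G a b X1 X2)
    (hminc : ∀ Y1 Y2 : Finset V, DegenPartition G a b h Y1 Y2 →
      wt G a b Y1 Y2 = wt G a b X1 X2 → X1.card ≤ Y1.card) :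
    (∀ u ∈ X1, (X1.filter (G.Adj u)).card ≤ a u → (X1.filter (G.Adj u)).card = a u) ∧
    (∀ v ∈ X2, (X2.filter (G.Adj v)).card + 1 ≤ b v + h v →
      (X2.filter (G.Adj v)).card + 1 = b v + h v) := by
  classical
  obtain ⟨hX1ne, hX2ne, hdisj, huniv, hm1, hm2⟩ := hP
  have degsplit : ∀ x : V,
      (X1.filter (G.Adj x)).card + (X2.filter (G.Adj x)).card = a x + b x + h x := by
    intro x
    rw [deg_split' G hdisj huniv x, hdeg]
  -- strict 1-meagerness of sets disjoint from a b-good set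
  have hnfA : ∀ (A B : Finset V), A.Nonempty → B.Nonempty → Disjoint A B →
      (∀ x ∈ B, b x ≤ (B.filter (G.Adj x)).card) →
      ∃ x ∈ A, (A.filter (G.Adj x)).card + 1 ≤ a x := by
    intro A B hA hB hd hBg
    by_contra hno
    push_neg at hno
    exact hnf ⟨A, B, hA, hB, hd, fun u hu => by have := hno u hu; omega, hBg⟩
  -- strict 2-meagerness of sets disjoint from an a-good set
  have hnfB : ∀ (A B : Finset V), A.Nonempty → B.Nonempty → Disjoint A B →
      (∀ x ∈ A, a x ≤ (A.filter (G.Adj x)).card) →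
      ∃ x ∈ B, (B.filter (G.Adj x)).card + 1 ≤ b x := by
    intro A B hA hB hd hAg
    by_contra hno
    push_neg at hno
    exact hnf ⟨A, B, hA, hB, hd, hAg, fun v hv => by have := hno v hv; omega⟩
  ----------------------------------------------------------------
  -- PART 1
  ----------------------------------------------------------------
  have part1 : ∀ u ∈ X1,
      (X1.filter (G.Adj u)).card ≤ a u → (X1.filter (G.Adj u)).card = a u := by
    intro u hu hule
    by_contra hnEq
    have hlt : (X1.filter (G.Adj u)).card + 1 ≤ a u := by omega
    by_cases hc : ∀ T ⊆ insert u X2, T.Nonempty →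
        ∃ x ∈ T, (T.filter (G.Adj x)).card + 1 ≤ b x + h x
    · -- case 1a : move u to side 2
      have hX1u : (X1.erase u).Nonempty := by
        rw [nonempty_iff_ne_empty]
        intro hemp
        have hX1eq : X1 = {u} := by
          apply Subset.antisymm
          · intro t ht
            rcases eq_or_ne t u with rfl | htu
            · exact mem_singleton_self t
            · exact absurd (mem_erase.mpr ⟨htu, ht⟩) (by rw [hemp]; exact notMem_empty t)
          · simpa using hu
        have huniv' : (univ : Finset V) = insert u X2 := by
          rw [← huniv, hX1eq, ← insert_eq]
        obtain ⟨x, _, hxl⟩ := hc univ (by rw [← huniv']) ⟨u, mem_univ u⟩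
        rw [deg_univ', hdeg] at hxl
        omega
      have hY : DegenPartition G a b h (X1.erase u) (insert u X2) := by
        refine ⟨hX1u, insert_nonempty _ _, ?_, ?_, ?_, hc⟩
        · rw [disjoint_left]
          intro t ht hti
          rcases mem_insert.mp hti with rfl | htX2
          · exact (notMem_erase t X1) ht
          · exact (disjoint_left.mp hdisj (mem_of_mem_erase ht)) htX2
        · rw [union_insert, ← insert_union, insert_erase hu, huniv]
        · intro A hA hAne
          exact hm1 A (hA.trans (erase_subset u X1)) hAne
      have hid := wt_moveOut' G hdisj huniv hu (hdeg u)
      have hle := hmaxw _ _ hY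
      omega
    · -- case 1b : a (b+h)-good set S exists inside X2 ∪ {u}
      push_neg at hc
      obtain ⟨S, hSsub, hSne, hSgood0⟩ := hc
      have hSgood : ∀ x ∈ S, b x ≤ (S.filter (G.Adj x)).card := by
        intro x hx
        have := hSgood0 x hx
        omega
      have hd2u : b u + h u + 1 ≤ (X2.filter (G.Adj u)).card := by
        have := degsplit u
        omega
      have hX2card : 2 ≤ X2.card := by
        have h1 : (X2.filter (G.Adj u)).card ≤ X2.card := card_le_card (filter_subset _ _)
        have := hb u
        omega
      have key : ∀ y ∈ X2, b y + h y ≤ (X2.filter (G.Adj y)).card := by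
        intro y hy
        have hyne : (X2.erase y).Nonempty := by
          rw [← card_pos, card_erase_of_mem hy]
          omega
        have hY : DegenPartition G a b h (insert y X1) (X2.erase y) := by
          refine ⟨insert_nonempty _ _, hyne, ?_, ?_, ?_, ?_⟩
          · rw [disjoint_left]
            intro t ht hte
            rcases mem_insert.mp ht with rfl | htX1
            · exact (notMem_erase t X2) hte
            · exact (disjoint_left.mp hdisj htX1) (mem_of_mem_erase hte)
          · rw [insert_union, ← union_insert, insert_erase hy, huniv]
          · -- 1-meagerness of X1 ∪ {y}
            intro A hA hAne
            by_cases humem : u ∈ A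
            · refine ⟨u, humem, ?_⟩
              have h1 : (A.filter (G.Adj u)).card ≤ ((insert y X1).filter (G.Adj u)).card :=
                deg_mono' G hA u
              have h2 := deg_insert_le' G X1 y u
              omega
            · by_cases hymem : y ∈ A
              · by_cases hA' : (A.erase y).Nonempty
                · have hsubA' : A.erase y ⊆ X1 := by
                    intro t ht
                    rcases mem_insert.mp (hA (mem_of_mem_erase ht)) with rfl | hgood
                    · exact absurd rfl (mem_erase.mp ht).1
                    · exact hgood
                  have hdisjA'S : Disjoint (A.erase y) S := by
                    rw [disjoint_left]
                    intro t ht htS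
                    rcases mem_insert.mp (hSsub htS) with rfl | htX2
                    · exact humem (mem_of_mem_erase ht)
                    · exact (disjoint_left.mp hdisj (hsubA' ht)) htX2
                  obtain ⟨x, hxA', hxl⟩ := hnfA (A.erase y) S hA' hSne hdisjA'S hSgood
                  refine ⟨x, mem_of_mem_erase hxA', ?_⟩
                  have h1 : (A.filter (G.Adj x)).card
                      ≤ ((insert y (A.erase y)).filter (G.Adj x)).card := by
                    apply deg_mono' G
                    rw [insert_erase hymem]
                  have h2 := deg_insert_le' G (A.erase y) y x
                  omega
                · have hAy : A = {y} := by
                    rw [not_nonempty_iff_eq_empty] at hA'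
                    apply Subset.antisymm
                    · intro t ht
                      rcases eq_or_ne t y with rfl | htne
                      · exact mem_singleton_self t
                      · exact absurd (mem_erase.mpr ⟨htne, ht⟩)
                          (by rw [hA']; exact notMem_empty t)
                    · simpa using hymem
                  refine ⟨y, hymem, ?_⟩
                  rw [hAy]
                  simp [filter_singleton, G.irrefl]
              · have hAX1 : A ⊆ X1 := by
                  intro t ht
                  rcases mem_insert.mp (hA ht) with rfl | hgood
                  · exact absurd ht hymem
                  · exact hgood
                exact hm1 A hAX1 hAne
          · intro B hB hBne
            exact hm2 B (hB.trans (erase_subset _ _)) hBne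
        have hid := wt_moveIn' G hdisj huniv hy (hdeg y)
        have hle := hmaxw _ _ hY
        have hds := degsplit y
        have := hh y
        omega
      obtain ⟨y, hyX2, hyl⟩ := hm2 X2 Subset.rfl hX2ne
      have := key y hyX2
      omega
  ----------------------------------------------------------------
  -- PART 2
  ----------------------------------------------------------------
  have part2 : ∀ v ∈ X2, (X2.filter (G.Adj v)).card + 1 ≤ b v + h v →
      (X2.filter (G.Adj v)).card + 1 = b v + h v := by
    intro v hv hvle
    by_contra hnEq2
    have hdef : (X2.filter (G.Adj v)).card + 2 ≤ b v + h v := by omega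
    have hd1v : a v + 2 ≤ (X1.filter (G.Adj v)).card := by
      have := degsplit v
      omega
    by_cases hc1 : ∀ A ⊆ insert v X1, A.Nonempty →
        ∃ x ∈ A, (A.filter (G.Adj x)).card ≤ a x
    · -- case 2a : move v to side 1
      have hvne : (X2.erase v).Nonempty := by
        rw [nonempty_iff_ne_empty]
        intro hemp
        have hX2eq : X2 = {v} := by
          apply Subset.antisymm
          · intro t ht
            rcases eq_or_ne t v with rfl | htv
            · exact mem_singleton_self t
            · exact absurd (mem_erase.mpr ⟨htv, ht⟩) (by rw [hemp]; exact notMem_empty t)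
          · simpa using hv
        have huniv' : (univ : Finset V) = insert v X1 := by
          rw [← huniv, hX2eq, union_comm, ← insert_eq]
        obtain ⟨x, _, hxl⟩ := hc1 univ (by rw [← huniv']) ⟨v, mem_univ v⟩
        rw [deg_univ', hdeg] at hxl
        have := hb x
        omega
      have hY : DegenPartition G a b h (insert v X1) (X2.erase v) := by
        refine ⟨insert_nonempty _ _, hvne, ?_, ?_, hc1, ?_⟩
        · rw [disjoint_left]
          intro t ht hte
          rcases mem_insert.mp ht with rfl | htX1
          · exact (notMem_erase t X2) hte
          · exact (disjoint_left.mp hdisj htX1) (mem_of_mem_erase hte)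
        · rw [insert_union, ← union_insert, insert_erase hv, huniv]
        · intro B hB hBne
          exact hm2 B (hB.trans (erase_subset _ _)) hBne
      have hid := wt_moveIn' G hdisj huniv hv (hdeg v)
      have hle := hmaxw _ _ hY
      have := hh v
      omega
    · -- case 2b
      push_neg at hc1
      obtain ⟨A, hAsub, hAne, hAgood0⟩ := hc1
      have hAgood : ∀ x ∈ A, a x + 1 ≤ (A.filter (G.Adj x)).card := by
        intro x hx
        have := hAgood0 x hx
        omega
      have hvA : v ∈ A := by
        by_contra hvnA
        have hAX1 : A ⊆ X1 := by
          intro t ht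
          rcases mem_insert.mp (hAsub ht) with rfl | hgood
          · exact absurd ht hvnA
          · exact hgood
        obtain ⟨x, hxA, hxl⟩ := hm1 A hAX1 hAne
        have := hAgood x hxA
        omega
      have hAvne : (A.erase v).Nonempty := by
        have h1 := hAgood v hvA
        have h2 : (A.filter (G.Adj v)).Nonempty := by
          rw [← card_pos]
          omega
        obtain ⟨t, htf⟩ := h2
        obtain ⟨htA, hadjvt⟩ := mem_filter.mp htf
        exact ⟨t, mem_erase.mpr ⟨hadjvt.ne', htA⟩⟩
      have hAeraseX1 : A.erase v ⊆ X1 := by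
        intro t ht
        rcases mem_insert.mp (hAsub (mem_of_mem_erase ht)) with rfl | hgood
        · exact absurd rfl (mem_erase.mp ht).1
        · exact hgood
      -- step 2: vertices of X1 outside A have d_{X1} ≥ a + 1
      have step2 : ∀ x ∈ X1, x ∉ A → a x + 1 ≤ (X1.filter (G.Adj x)).card := by
        intro x hx hxA
        by_contra hno
        have hxle : (X1.filter (G.Adj x)).card ≤ a x := by omega
        have hX1x : (X1.erase x).Nonempty := by
          obtain ⟨t, ht⟩ := hAvne
          exact ⟨t, mem_erase.mpr
            ⟨fun hrfl => hxA (hrfl ▸ mem_of_mem_erase ht), hAeraseX1 ht⟩⟩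
        have hY : DegenPartition G a b h (X1.erase x) (insert x X2) := by
          refine ⟨hX1x, insert_nonempty _ _, ?_, ?_, ?_, ?_⟩
          · rw [disjoint_left]
            intro t ht hti
            rcases mem_insert.mp hti with rfl | htX2
            · exact (notMem_erase t X1) ht
            · exact (disjoint_left.mp hdisj (mem_of_mem_erase ht)) htX2
          · rw [union_insert, ← insert_union, insert_erase hx, huniv]
          · intro A' hA' hA'ne
            exact hm1 A' (hA'.trans (erase_subset x X1)) hA'ne
          · -- 2-meagerness of X2 ∪ {x}
            intro B hB hBne
            by_cases hvB : v ∈ B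
            · refine ⟨v, hvB, ?_⟩
              have h1 : (B.filter (G.Adj v)).card
                  ≤ ((insert x X2).filter (G.Adj v)).card := deg_mono' G hB v
              have h2 := deg_insert_le' G X2 x v
              omega
            · have hdisjAB : Disjoint A B := by
                rw [disjoint_left]
                intro t htA htB
                rcases mem_insert.mp (hAsub htA) with rfl | ht1
                · exact hvB htB
                · rcases mem_insert.mp (hB htB) with rfl | ht2
                  · exact hxA htA
                  · exact (disjoint_left.mp hdisj ht1) ht2
              obtain ⟨z, hzB, hzl⟩ := hnfB A B hAne hBne hdisjAB
                (fun t ht => le_trans (Nat.le_succ _) (hAgood t ht))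
              exact ⟨z, hzB, by omega⟩
        have hid := wt_moveOut' G hdisj huniv hx (hdeg x)
        have hle := hmaxw _ _ hY
        have hEq : wt G a b (X1.erase x) (insert x X2) = wt G a b X1 X2 := by omega
        have hcard := hminc _ _ hY hEq
        rw [card_erase_of_mem hx] at hcard
        have hc1' : 1 ≤ X1.card := card_pos.mpr hX1ne
        omega
      -- step 3
      have step3 : ∀ x ∈ X1, a x + 1 ≤ ((insert v X1).filter (G.Adj x)).card := by
        intro x hx
        by_cases hxA : x ∈ A
        · exact le_trans (hAgood x hxA) (deg_mono' G hAsub x)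
        · exact le_trans (step2 x hx hxA) (deg_mono' G (subset_insert v X1) x)
      -- step 4 : a tight vertex z0 of X1, adjacent to v
      obtain ⟨z0, hz0X1, hz0l⟩ := hm1 X1 Subset.rfl hX1ne
      have hz0eq : (X1.filter (G.Adj z0)).card = a z0 := part1 z0 hz0X1 hz0l
      have hadj : G.Adj z0 v := by
        by_contra hnadj
        have hs := step3 z0 hz0X1
        rw [deg_insert_not_adj' G hnadj] at hs
        omega
      have hz0v : z0 ≠ v := hadj.ne
      have hdz0 : (X2.filter (G.Adj z0)).card = b z0 + h z0 := by
        have := degsplit z0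
        omega
      by_cases hc2 : ∀ T ⊆ insert z0 X2, T.Nonempty →
          ∃ x ∈ T, (T.filter (G.Adj x)).card + 1 ≤ b x + h x
      · -- (v-a) : move z0 to side 2, weight ties, contradict minimality of |X1|
        have hX1z0 : (X1.erase z0).Nonempty := by
          rw [nonempty_iff_ne_empty]
          intro hemp
          have hX1eq : X1 = {z0} := by
            apply Subset.antisymm
            · intro t ht
              rcases eq_or_ne t z0 with rfl | htz
              · exact mem_singleton_self t
              · exact absurd (mem_erase.mpr ⟨htz, ht⟩) (by rw [hemp]; exact notMem_empty t)
            · simpa using hz0X1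
          have huniv' : (univ : Finset V) = insert z0 X2 := by
            rw [← huniv, hX1eq, ← insert_eq]
          obtain ⟨x, _, hxl⟩ := hc2 univ (by rw [← huniv']) ⟨z0, mem_univ z0⟩
          rw [deg_univ', hdeg] at hxl
          omega
        have hY : DegenPartition G a b h (X1.erase z0) (insert z0 X2) := by
          refine ⟨hX1z0, insert_nonempty _ _, ?_, ?_, ?_, hc2⟩
          · rw [disjoint_left]
            intro t ht hti
            rcases mem_insert.mp hti with rfl | htX2
            · exact (notMem_erase t X1) ht
            · exact (disjoint_left.mp hdisj (mem_of_mem_erase ht)) htX2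
          · rw [union_insert, ← insert_union, insert_erase hz0X1, huniv]
          · intro A' hA' hA'ne
            exact hm1 A' (hA'.trans (erase_subset z0 X1)) hA'ne
        have hid := wt_moveOut' G hdisj huniv hz0X1 (hdeg z0)
        rw [hz0eq] at hid
        have hle := hmaxw _ _ hY
        have hEq : wt G a b (X1.erase z0) (insert z0 X2) = wt G a b X1 X2 := by omega
        have hcard := hminc _ _ hY hEq
        rw [card_erase_of_mem hz0X1] at hcard
        have hc1' : 1 ≤ X1.card := card_pos.mpr hX1ne
        omega
      · -- (v-b) : swap z0 and v
        push_neg at hc2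
        obtain ⟨T, hTsub, hTne, hTgood0⟩ := hc2
        have hTgood : ∀ x ∈ T, b x ≤ (T.filter (G.Adj x)).card := by
          intro x hx
          have := hTgood0 x hx
          omega
        have hvT : v ∉ T := by
          intro hvT
          have h1 := hTgood0 v hvT
          have h2 : (T.filter (G.Adj v)).card ≤ ((insert z0 X2).filter (G.Adj v)).card :=
            deg_mono' G hTsub v
          have h3 := deg_insert_le' G X2 z0 v
          omega
        have hY2eq : (insert z0 X2).erase v = insert z0 (X2.erase v) := by
          ext t
          simp only [mem_erase, mem_insert]
          constructor
          · rintro ⟨h1, h2 | h3⟩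
            · exact Or.inl h2
            · exact Or.inr ⟨h1, h3⟩
          · rintro (rfl | ⟨h1, h2⟩)
            · exact ⟨hz0v, Or.inl rfl⟩
            · exact ⟨h1, Or.inr h2⟩
        have hY : DegenPartition G a b h (insert v (X1.erase z0)) (insert z0 (X2.erase v)) := by
          refine ⟨insert_nonempty _ _, insert_nonempty _ _, ?_, ?_, ?_, ?_⟩
          · rw [disjoint_left]
            intro t ht ht2
            rcases mem_insert.mp ht with rfl | ht1
            · rcases mem_insert.mp ht2 with hEq | hmm
              · exact hz0v hEq.symm
              · exact (notMem_erase t X2) hmm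
            · rcases mem_insert.mp ht2 with rfl | hmm
              · exact (mem_erase.mp ht1).1 rfl
              · exact (disjoint_left.mp hdisj (mem_of_mem_erase ht1)) (mem_of_mem_erase hmm)
          · ext t
            simp only [mem_union, mem_insert, mem_erase, mem_univ, iff_true]
            by_cases h1 : t = v
            · exact Or.inl (Or.inl h1)
            by_cases h2 : t = z0
            · exact Or.inr (Or.inl h2)
            have ht : t ∈ X1 ∪ X2 := huniv ▸ mem_univ t
            rcases mem_union.mp ht with hmem | hmem
            · exact Or.inl (Or.inr ⟨h2, hmem⟩)
            · exact Or.inr (Or.inr ⟨h1, hmem⟩)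
          · -- 1-meagerness of (X1 \ {z0}) ∪ {v}
            intro A' hA' hA'ne
            by_cases hvA' : v ∈ A'
            · by_cases hA'' : (A'.erase v).Nonempty
              · have hsubA'' : A'.erase v ⊆ X1.erase z0 := by
                  intro t ht
                  rcases mem_insert.mp (hA' (mem_of_mem_erase ht)) with rfl | hgood
                  · exact absurd rfl (mem_erase.mp ht).1
                  · exact hgood
                have hdisjT : Disjoint (A'.erase v) T := by
                  rw [disjoint_left]
                  intro t ht htT
                  have ht1 := hsubA'' ht
                  rcases mem_insert.mp (hTsub htT) with rfl | htX2
                  · exact (mem_erase.mp ht1).1 rfl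
                  · exact (disjoint_left.mp hdisj (mem_of_mem_erase ht1)) htX2
                obtain ⟨x, hxA'', hxl⟩ := hnfA (A'.erase v) T hA'' hTne hdisjT hTgood
                refine ⟨x, mem_of_mem_erase hxA'', ?_⟩
                have h1 : (A'.filter (G.Adj x)).card
                    ≤ ((insert v (A'.erase v)).filter (G.Adj x)).card := by
                  apply deg_mono' G
                  rw [insert_erase hvA']
                have h2 := deg_insert_le' G (A'.erase v) v x
                omega
              · have hA'v : A' = {v} := by
                  rw [not_nonempty_iff_eq_empty] at hA''
                  apply Subset.antisymm
                  · intro t ht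
                    rcases eq_or_ne t v with rfl | htne
                    · exact mem_singleton_self t
                    · exact absurd (mem_erase.mpr ⟨htne, ht⟩)
                        (by rw [hA'']; exact notMem_empty t)
                  · simpa using hvA'
                refine ⟨v, hvA', ?_⟩
                rw [hA'v]
                simp [filter_singleton, G.irrefl]
            · have hsub : A' ⊆ X1 := by
                intro t ht
                rcases mem_insert.mp (hA' ht) with rfl | hgood
                · exact absurd ht hvA'
                · exact mem_of_mem_erase hgood
              exact hm1 A' hsub hA'ne
          · -- 2-meagerness of (X2 \ {v}) ∪ {z0}
            intro B hB hBne
            by_cases hz0B : z0 ∈ B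
            · refine ⟨z0, hz0B, ?_⟩
              have h1 : (B.filter (G.Adj z0)).card
                  ≤ ((insert z0 (X2.erase v)).filter (G.Adj z0)).card := deg_mono' G hB z0
              rw [deg_insert_self'] at h1
              have h2 := deg_erase_adj' G hv hadj
              omega
            · have hsub : B ⊆ X2 := by
                intro t ht
                rcases mem_insert.mp (hB ht) with rfl | hgood
                · exact absurd ht hz0B
                · exact mem_of_mem_erase hgood
              exact hm2 B hsub hBne
        -- weight bookkeeping
        have hid1 := wt_moveOut' G hdisj huniv hz0X1 (hdeg z0)
        rw [hz0eq] at hid1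
        have hdisjP : Disjoint (X1.erase z0) (insert z0 X2) := by
          rw [disjoint_left]
          intro t ht hti
          rcases mem_insert.mp hti with rfl | htX2
          · exact (notMem_erase t X1) ht
          · exact (disjoint_left.mp hdisj (mem_of_mem_erase ht)) htX2
        have hunivP : (X1.erase z0) ∪ insert z0 X2 = univ := by
          rw [union_insert, ← insert_union, insert_erase hz0X1, huniv]
        have hid2 := wt_moveIn' G hdisjP hunivP (mem_insert_of_mem hv) (hdeg v)
        rw [hY2eq] at hid2
        have hdd := deg_erase_adj' G hz0X1 hadj.symm
        have hle := hmaxw _ _ hY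
        have := hh v
        have := hh z0
        omega
  exact ⟨part1, part2⟩
end
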